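/- arXiv:2402.10225 — 5 statements merged into one kernel-verified Lean document; each statement's English description precedes it below -/
import Mathlib

section
/- If A is an m×n type-I staircase matrix (nonzero diagonal entries a_{ii} ≠ 0 for i ≤ min(m,n), zeros below the diagonal propagate down-left, zeros above the diagonal propagate up-right) and B = A[α|β] is a nontrivial square submatrix (i.e., a_{α_i,β_i} ≠ 0 for all i), then B is itself a type-I staircase matrix. -/
open Matrix

/-- Type-I staircase matrix: nonzero diagonal, zeros below the diagonal
propagate down-left, zeros above propagate up-right. -/
def TypeI {m n : ℕ} (A : Matrix (Fin m) (Fin n) ℝ) : Prop :=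
  (∀ (i : Fin m) (j : Fin n), (i : ℕ) = (j : ℕ) → A i j ≠ 0) ∧
  (∀ (i : Fin m) (j : Fin n), (j : ℕ) < (i : ℕ) → A i j = 0 →
    ∀ (k : Fin m) (l : Fin n), (i : ℕ) ≤ (k : ℕ) → (l : ℕ) ≤ (j : ℕ) → A k l = 0) ∧
  (∀ (i : Fin m) (j : Fin n), (i : ℕ) < (j : ℕ) → A i j = 0 →
    ∀ (k : Fin m) (l : Fin n), (k : ℕ) ≤ (i : ℕ) → (j : ℕ) ≤ (l : ℕ) → A k l = 0)

/-- Type-II staircase: reversing the rows (i.e. multiplying by the backward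
identity on the left) gives a type-I staircase matrix. -/
def TypeII {m n : ℕ} (A : Matrix (Fin m) (Fin n) ℝ) : Prop :=
  TypeI (Matrix.of fun i j => A (Fin.rev i) j)

/-- A signature sequence has entries ±1. -/
def IsSignature {r : ℕ} (ε : Fin r → ℝ) : Prop := ∀ i, ε i = 1 ∨ ε i = -1

/-- Consecutive increasing sequence of indices (element of Q⁰). -/
def Consec {k n : ℕ} (α : Fin k → Fin n) : Prop :=
  StrictMono α ∧ ∀ i j : Fin k, (i : ℕ) ≤ (j : ℕ) →
    (α j : ℕ) = (α i : ℕ) + ((j : ℕ) - (i : ℕ))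

/-- Almost strictly sign regular matrix with signature ε. -/
def ASSR {m n : ℕ} (A : Matrix (Fin m) (Fin n) ℝ) (ε : Fin (min m n) → ℝ) : Prop :=
  (TypeI A ∨ TypeII A) ∧
  ∀ (k : ℕ) (hk0 : 0 < k) (hk : k ≤ min m n)
    (α : Fin k → Fin m) (β : Fin k → Fin n),
    StrictMono α → StrictMono β → (∀ i, A (α i) (β i) ≠ 0) →
    0 < ε ⟨k - 1, by omega⟩ * (A.submatrix α β).det

/-- Sign regular matrix with signature ε. -/
def SR {m n : ℕ} (A : Matrix (Fin m) (Fin n) ℝ) (ε : Fin (min m n) → ℝ) : Prop :=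
  (TypeI A ∨ TypeII A) ∧
  ∀ (k : ℕ) (hk0 : 0 < k) (hk : k ≤ min m n)
    (α : Fin k → Fin m) (β : Fin k → Fin n),
    StrictMono α → StrictMono β →
    0 ≤ ε ⟨k - 1, by omega⟩ * (A.submatrix α β).det

/-- Totally positive matrix: all minors are nonnegative. -/
def TP {m n : ℕ} (A : Matrix (Fin m) (Fin n) ℝ) : Prop :=
  ∀ (k : ℕ) (α : Fin k → Fin m) (β : Fin k → Fin n),
    StrictMono α → StrictMono β → 0 ≤ (A.submatrix α β).det

/-- a nontrivial square submatrix of a type-I staircase matrix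
is itself type-I staircase. -/
theorem stmt0 {m n k : ℕ} (A : Matrix (Fin m) (Fin n) ℝ) (hA : TypeI A)
    (α : Fin k → Fin m) (β : Fin k → Fin n)
    (hα : StrictMono α) (hβ : StrictMono β)
    (hnt : ∀ i, A (α i) (β i) ≠ 0) :
    TypeI (A.submatrix α β) := by
  obtain ⟨hd, hlo, hhi⟩ := hA
  refine ⟨fun i j hij => ?_, fun i j hij h0 p q hp hq => ?_,
    fun i j hij h0 p q hp hq => ?_⟩
  · have : i = j := Fin.ext hij
    subst this; exact hnt i
  · have hβα : (β j : ℕ) < (α i : ℕ) := by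
      rcases lt_trichotomy ((α i : ℕ)) ((β j : ℕ)) with h | h | h
      · exact absurd (hhi (α i) (β j) h h0 (α j) (β j)
          (le_of_lt (hα (Fin.lt_def.mpr hij))) le_rfl) (hnt j)
      · exact absurd h0 (hd _ _ h)
      · exact h
    exact hlo (α i) (β j) hβα h0 (α p) (β q)
      (hα.monotone (Fin.le_def.mpr hp)) (hβ.monotone (Fin.le_def.mpr hq))
  · have hαβ : (α i : ℕ) < (β j : ℕ) := by
      rcases lt_trichotomy ((β j : ℕ)) ((α i : ℕ)) with h | h | h
      · exact absurd (hlo (α i) (β j) h h0 (α i) (β i)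
          le_rfl (le_of_lt (hβ (Fin.lt_def.mpr hij)))) (hnt i)
      · exact absurd h0 (hd _ _ h.symm)
      · exact h
    exact hhi (α i) (β j) hαβ h0 (α p) (β q)
      (hα.monotone (Fin.le_def.mpr hp)) (hβ.monotone (Fin.le_def.mpr hq))
end

section
/- Let A be an m×n type-I staircase ASSR matrix of maximal rank r = min(m,n) with signature ε = (ε_1,…,ε_r). Then every nontrivial square submatrix B = A[α|β] of order k ≤ r is an ASSR matrix with signature (ε_1,…,ε_k). -/
open Matrix

/-- every nontrivial square submatrix of order k of a type-I
staircase ASSR matrix of maximal rank is ASSR with the truncated signature. -/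
theorem stmt1 {m n k : ℕ} (A : Matrix (Fin m) (Fin n) ℝ)
    (ε : Fin (min m n) → ℝ) (hsig : IsSignature ε)
    (hrank : A.rank = min m n) (hI : TypeI A) (hASSR : ASSR A ε)
    (hk0 : 0 < k) (hk : k ≤ min m n)
    (α : Fin k → Fin m) (β : Fin k → Fin n)
    (hα : StrictMono α) (hβ : StrictMono β)
    (hnt : ∀ i, A (α i) (β i) ≠ 0) :
    ASSR (A.submatrix α β)
      (fun i : Fin (min k k) => ε ⟨(i : ℕ), by have := i.isLt; omega⟩) := by
  obtain ⟨hd, hlo, hup⟩ := hI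
  constructor
  · left
    refine ⟨?_, ?_, ?_⟩
    · intro i j hij
      have : i = j := Fin.ext hij
      subst this
      exact hnt i
    · intro i j hji h0 p q hip hqj
      simp only [submatrix_apply] at h0 ⊢
      rcases lt_trichotomy ((β j : ℕ)) ((α i : ℕ)) with h | h | h
      · exact hlo (α i) (β j) h h0 (α p) (β q)
          (hα.monotone (Fin.le_def.mpr hip)) (hβ.monotone (Fin.le_def.mpr hqj))
      · exact absurd h0 (hd (α i) (β j) h.symm)
      · exact absurd (hup (α i) (β j) h h0 (α ⟨j, by omega⟩) (β j)
          (le_of_lt (hα (Fin.lt_def.mpr hji))) le_rfl) (hnt j)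
    · intro i j hij h0 p q hpi hjq
      simp only [submatrix_apply] at h0 ⊢
      rcases lt_trichotomy ((α i : ℕ)) ((β j : ℕ)) with h | h | h
      · exact hup (α i) (β j) h h0 (α p) (β q)
          (hα.monotone (Fin.le_def.mpr hpi)) (hβ.monotone (Fin.le_def.mpr hjq))
      · exact absurd h0 (hd (α i) (β j) h)
      · exact absurd (hlo (α i) (β j) h h0 (α i) (β ⟨i, by omega⟩)
          le_rfl (le_of_lt (hβ (Fin.lt_def.mpr hij)))) (hnt i)
  · intro k' hk0' hk' γ δ hγ hδ hnt'
    have hkk : k' ≤ k := hk'.trans (min_self k).le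
    have := hASSR.2 k' hk0' (hkk.trans hk) (α ∘ γ) (β ∘ δ) (hα.comp hγ) (hβ.comp hδ)
      (fun i => hnt' i)
    simpa [Matrix.submatrix_submatrix] using this
end

section
/- Let A be an m×n type-I staircase matrix with m ≥ n, rank(A) = n, and A = QR a QR factorization with R having strictly positive diagonal. If det A[α|β] with α ∈ Q⁰_{k,m}, β ∈ Q⁰_{k,n} is a column boundary minor of A, then det Q[α|β] is a column generalized boundary minor of Q. -/
open Matrix

/-- Column boundary submatrix: consecutive rows and columns, nonzero diagonal
entries, and either β₁ = 1 or the column to the left of the block vanishes on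
the rows α. -/
def ColBoundary {m n k : ℕ} [NeZero k] (A : Matrix (Fin m) (Fin n) ℝ)
    (α : Fin k → Fin m) (β : Fin k → Fin n) : Prop :=
  Consec α ∧ Consec β ∧ (∀ i, A (α i) (β i) ≠ 0) ∧
  ∀ j' : Fin n, (j' : ℕ) + 1 = (β 0 : ℕ) → ∀ i, A (α i) j' = 0

/-- Column generalized boundary submatrix: consecutive rows and columns,
q_{α₁,β₁} ≠ 0, and either β₁ = 1 or the column to the left of the block
vanishes on the rows α. -/
def ColGenBoundary {m n k : ℕ} [NeZero k] (Q : Matrix (Fin m) (Fin n) ℝ)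
    (α : Fin k → Fin m) (β : Fin k → Fin n) : Prop :=
  Consec α ∧ Consec β ∧ Q (α 0) (β 0) ≠ 0 ∧
  ∀ j' : Fin n, (j' : ℕ) + 1 = (β 0 : ℕ) → ∀ i, Q (α i) j' = 0

/-- in a QR factorization (R with strictly positive diagonal)
of a type-I staircase matrix of maximal rank, every column boundary minor of
A corresponds to a column generalized boundary minor of Q. -/
theorem stmt10 {m n k : ℕ} [NeZero k] (hmn : n ≤ m)
    (A Q : Matrix (Fin m) (Fin n) ℝ) (R : Matrix (Fin n) (Fin n) ℝ)
    (hI : TypeI A) (hrank : A.rank = n)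
    (hQR : A = Q * R) (hQ : Qᵀ * Q = 1)
    (htri : R.BlockTriangular id) (hdiag : ∀ i, 0 < R i i)
    (α : Fin k → Fin m) (β : Fin k → Fin n)
    (hbd : ColBoundary A α β) :
    ColGenBoundary Q α β := by
  obtain ⟨hca, hcb, hdiagA, hleft⟩ := hbd
  -- R is invertible
  have hdetR : R.det ≠ 0 := by
    rw [Matrix.det_of_upperTriangular htri]
    exact ne_of_gt (Finset.prod_pos fun i _ => hdiag i)
  haveI : Invertible R := R.invertibleOfIsUnitDet (isUnit_iff_ne_zero.mpr hdetR)
  have hRinv : R⁻¹.BlockTriangular id := blockTriangular_inv_of_blockTriangular htri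
  have hQA : Q = A * R⁻¹ := by
    rw [hQR, Matrix.mul_assoc, Matrix.mul_nonsing_inv R (isUnit_iff_ne_zero.mpr hdetR),
      Matrix.mul_one]
  -- key: A (α i) l = 0 for all l < β 0
  have hkey : ∀ (i : Fin k) (l : Fin n), (l : ℕ) < (β 0 : ℕ) → A (α i) l = 0 := by
    intro i l hl
    have hb0 : 0 < (β 0 : ℕ) := Nat.pos_of_ne_zero (by omega)
    set j' : Fin n := ⟨(β 0 : ℕ) - 1, by omega⟩ with hj'
    have hj'eq : (j' : ℕ) + 1 = (β 0 : ℕ) := by simp [hj']; omega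
    have hz : A (α i) j' = 0 := hleft j' hj'eq i
    have hβi : (β 0 : ℕ) ≤ (β i : ℕ) := by
      have h0i : (0 : Fin k) ≤ i := by simp [Fin.le_def]
      rcases eq_or_lt_of_le h0i with h | h
      · rw [← h]
      · exact le_of_lt (hcb.1 h)
    rcases lt_trichotomy ((j' : ℕ)) ((α i : ℕ)) with h | h | h
    · exact hI.2.1 (α i) j' h hz (α i) l le_rfl (by omega)
    · exact absurd hz (hI.1 (α i) j' h.symm)
    · exact absurd (hI.2.2 (α i) j' h hz (α i) (β i) le_rfl (by omega)) (hdiagA i)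
  refine ⟨hca, hcb, ?_, ?_⟩
  · -- Q (α 0) (β 0) ≠ 0
    have hQval : Q (α 0) (β 0) = A (α 0) (β 0) * R⁻¹ (β 0) (β 0) := by
      rw [hQA]
      rw [Matrix.mul_apply]
      rw [Finset.sum_eq_single (β 0)]
      · intro l _ hne
        rcases lt_or_gt_of_ne (fun h : (l : ℕ) = (β 0 : ℕ) => hne (Fin.ext h)) with h | h
        · rw [hkey 0 l h, zero_mul]
        · rw [hRinv (show id (β 0) < id l from h), mul_zero]
      · intro h; exact absurd (Finset.mem_univ _) h
    have hRinvdiag : R⁻¹ (β 0) (β 0) ≠ 0 := by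
      intro h0
      have h1 : (R * R⁻¹) (β 0) (β 0) = 1 := by
        rw [Matrix.mul_nonsing_inv R (isUnit_iff_ne_zero.mpr hdetR)]; simp
      rw [Matrix.mul_apply] at h1
      have : ∀ l ∈ Finset.univ, R (β 0) l * R⁻¹ l (β 0) = 0 := by
        intro l _
        rcases lt_trichotomy ((l : ℕ)) ((β 0 : ℕ)) with h | h | h
        · rw [htri (show id l < id (β 0) from h), zero_mul]
        · rw [Fin.ext h, h0, mul_zero]
        · rw [hRinv (show id (β 0) < id l from h), mul_zero]
      rw [Finset.sum_eq_zero this] at h1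
      exact one_ne_zero h1.symm
    rw [hQval]
    exact mul_ne_zero (hdiagA 0) hRinvdiag
  · intro j' hj' i
    rw [hQA, Matrix.mul_apply]
    refine Finset.sum_eq_zero fun l _ => ?_
    rcases le_or_gt ((l : ℕ)) ((j' : ℕ)) with h | h
    · rw [hkey i l (by omega), zero_mul]
    · rw [hRinv (show id j' < id l from h), mul_zero]
end

section
/- Let A be an m×n type-I staircase matrix whose submatrix A[α|β] (α ∈ Q_{k,m}, β ∈ Q_{k,n}) is nontrivial, and suppose a_{α_s, β_{s+1}} = 0 for some 1 ≤ s ≤ k−1. Then det A[α|β] = det A[α_1,…,α_s | β_1,…,β_s] · det A[α_{s+1},…,α_k | β_{s+1},…,β_k], and both factors are nontrivial minors of A. -/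
open Matrix

/-- a nontrivial submatrix of a type-I staircase matrix with a
zero entry a_{α_s,β_{s+1}} is block lower triangular, so its determinant
factors as the product of the two nontrivial diagonal-block minors. -/
theorem stmt14 {m n k : ℕ} (A : Matrix (Fin m) (Fin n) ℝ) (hI : TypeI A)
    (α : Fin k → Fin m) (β : Fin k → Fin n)
    (hα : StrictMono α) (hβ : StrictMono β)
    (hnt : ∀ i, A (α i) (β i) ≠ 0)
    (s : ℕ) (hs1 : 1 ≤ s + 1) (hsk : s + 1 < k)
    (hzero : A (α ⟨s, by omega⟩) (β ⟨s + 1, hsk⟩) = 0) :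
    (A.submatrix α β).det =
        (A.submatrix (fun i : Fin (s + 1) => α (Fin.castLE (by omega) i))
            (fun i : Fin (s + 1) => β (Fin.castLE (by omega) i))).det *
          (A.submatrix (fun i : Fin (k - (s + 1)) => α ⟨s + 1 + (i : ℕ), by omega⟩)
            (fun i : Fin (k - (s + 1)) => β ⟨s + 1 + (i : ℕ), by omega⟩)).det ∧
      (∀ i : Fin (s + 1),
        A (α (Fin.castLE (by omega) i)) (β (Fin.castLE (by omega) i)) ≠ 0) ∧
      (∀ i : Fin (k - (s + 1)),
        A (α ⟨s + 1 + (i : ℕ), by omega⟩) (β ⟨s + 1 + (i : ℕ), by omega⟩) ≠ 0) := by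
    -- First establish (α s : ℕ) < (β (s+1) : ℕ)
  obtain ⟨hdiag, hlow, hup⟩ := hI
  have hlt : ((α ⟨s, by omega⟩ : Fin m) : ℕ) < ((β ⟨s + 1, hsk⟩ : Fin n) : ℕ) := by
    rcases lt_trichotomy ((α ⟨s, by omega⟩ : Fin m) : ℕ) ((β ⟨s + 1, hsk⟩ : Fin n) : ℕ) with h | h | h
    · exact h
    · exact absurd hzero (hdiag _ _ h)
    · exfalso
      apply hnt ⟨s + 1, hsk⟩
      exact hlow _ _ h hzero (α ⟨s + 1, hsk⟩) (β ⟨s + 1, hsk⟩)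
        (le_of_lt (hα (by exact Fin.mk_lt_mk.mpr (by omega)))) le_rfl
  have hblock : ∀ (i j : Fin k), (i : ℕ) ≤ s → s + 1 ≤ (j : ℕ) → A (α i) (β j) = 0 := by
    intro i j hi hj
    exact hup _ _ hlt hzero (α i) (β j)
      (hα.monotone (Fin.le_def.mpr hi)) (hβ.monotone (Fin.le_def.mpr hj))
  refine ⟨?_, fun i => hnt _, fun i => hnt _⟩
  have hk' : (s + 1) + (k - (s + 1)) = k := by omega
  set e : Fin (s + 1) ⊕ Fin (k - (s + 1)) ≃ Fin k :=
    finSumFinEquiv.trans (finCongr hk') with he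
  have hev : ∀ x : Fin (s + 1) ⊕ Fin (k - (s + 1)),
      ((e x : Fin k) : ℕ) = Sum.elim (fun a : Fin (s + 1) => (a : ℕ))
        (fun b : Fin (k - (s + 1)) => s + 1 + (b : ℕ)) x := by
    rintro (a | b) <;> simp [he, finSumFinEquiv]
  have hl : ∀ a : Fin (s + 1), e (Sum.inl a) = Fin.castLE (by omega) a :=
    fun a => Fin.ext (by simpa using hev (Sum.inl a))
  have hr : ∀ b : Fin (k - (s + 1)), e (Sum.inr b) = ⟨s + 1 + (b : ℕ), by omega⟩ :=
    fun b => Fin.ext (by simpa using hev (Sum.inr b))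
  have hsub : (A.submatrix α β).submatrix e e =
      Matrix.fromBlocks
        (A.submatrix (fun i : Fin (s + 1) => α (Fin.castLE (by omega) i))
            (fun i : Fin (s + 1) => β (Fin.castLE (by omega) i)))
        0
        (A.submatrix (fun i : Fin (k - (s + 1)) => α ⟨s + 1 + (i : ℕ), by omega⟩)
            (fun j : Fin (s + 1) => β (Fin.castLE (by omega) j)))
        (A.submatrix (fun i : Fin (k - (s + 1)) => α ⟨s + 1 + (i : ℕ), by omega⟩)
            (fun i : Fin (k - (s + 1)) => β ⟨s + 1 + (i : ℕ), by omega⟩)) := by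
    ext i j
    rcases i with a | b <;> rcases j with c | d
    · simp [hl]
    · simp only [Matrix.submatrix_apply, Matrix.fromBlocks_apply₁₂, Matrix.zero_apply]
      apply hblock
      · rw [hev (Sum.inl a)]; simp; omega
      · rw [hev (Sum.inr d)]; simp
    · simp [hl, hr]
    · simp [hr]
  calc (A.submatrix α β).det = ((A.submatrix α β).submatrix e e).det :=
        (Matrix.det_submatrix_equiv_self e _).symm
    _ = _ := by rw [hsub, Matrix.det_fromBlocks_zero₁₂]
end

section
/- Let A be an m×n type-I staircase ASSR matrix with m ≥ n, rank n, signature ε, A = QR its QR factorization with R upper triangular with positive diagonal, and let det A[α|β] be a column boundary minor of A with β_1 > 1 and consecutive α, β. Then in the Cauchy–Binet expansion det A[α|β] = Σ_{ω ∈ Q_{k,n}} det Q[α|ω] det R[ω|β], every term with ω ≠ β vanishes, so det A[α|β] = det Q[α|β] det R[β|β]. -/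
open Matrix

theorem stmt18 {m n k : ℕ} [NeZero k] (hmn : n ≤ m)
    (A Q : Matrix (Fin m) (Fin n) ℝ) (R : Matrix (Fin n) (Fin n) ℝ)
    (hI : TypeI A) (hrank : A.rank = n)
    (ε : Fin (min m n) → ℝ) (hsig : IsSignature ε) (hASSR : ASSR A ε)
    (hQR : A = Q * R) (hQ : Qᵀ * Q = 1)
    (htri : R.BlockTriangular id) (hdiag : ∀ i, 0 < R i i)
    (α : Fin k → Fin m) (β : Fin k → Fin n)
    (hbd : ColBoundary A α β) (hβ1 : 0 < (β 0 : ℕ)) :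
    (∀ ω : Fin k → Fin n, StrictMono ω → ω ≠ β →
        (Q.submatrix α ω).det * (R.submatrix ω β).det = 0) ∧
      (A.submatrix α β).det = (Q.submatrix α β).det * (R.submatrix β β).det := by
  obtain ⟨hα, hβ, hnz, hcol⟩ := hbd
  have hk0 : 0 < k := Nat.pos_of_ne_zero (NeZero.ne k)
  have hβ0n : (β 0 : ℕ) < n := (β 0).isLt
  set j' : Fin n := ⟨(β 0 : ℕ) - 1, by omega⟩ with hj'
  have hj'1 : (j' : ℕ) + 1 = (β 0 : ℕ) := by simp [hj']; omega
  have hAj' : ∀ i, A (α i) j' = 0 := hcol j' hj'1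
  -- β 0 ≤ α 0
  have hβα : (β 0 : ℕ) ≤ (α 0 : ℕ) := by
    by_contra hlt
    push_neg at hlt
    rcases Nat.lt_or_ge (α 0 : ℕ) (j' : ℕ) with h1 | h2
    · exact hnz 0 (hI.2.2 (α 0) j' h1 (hAj' 0) (α 0) (β 0) le_rfl (by omega))
    · rcases Nat.eq_or_lt_of_le h2 with h3 | h3
      · exact hI.1 (α 0) j' h3.symm (hAj' 0)
      · omega
  -- rows α have zero prefix up to β 0 in A
  have hAzero : ∀ (i : Fin k) (l : Fin n), (l : ℕ) < (β 0 : ℕ) → A (α i) l = 0 := by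
    intro i l hl
    have hαi : (α 0 : ℕ) ≤ (α i : ℕ) := by
      exact_mod_cast hα.1.monotone (show (0 : Fin k) ≤ i from Fin.zero_le i)
    exact hI.2.1 (α 0) j' (by omega) (hAj' 0) (α i) l hαi (by omega)
  -- R is invertible
  have hdetR : R.det ≠ 0 := by
    rw [Matrix.det_of_upperTriangular htri]
    exact ne_of_gt (Finset.prod_pos fun i _ => hdiag i)
  haveI : Invertible R := R.invertibleOfIsUnitDet (isUnit_iff_ne_zero.mpr hdetR)
  have hRinv : R⁻¹.BlockTriangular id := Matrix.blockTriangular_inv_of_blockTriangular htri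
  have hQA : Q = A * R⁻¹ := by
    rw [hQR, Matrix.mul_assoc, Matrix.mul_nonsing_inv R (isUnit_iff_ne_zero.mpr hdetR),
      Matrix.mul_one]
  -- rows α have zero prefix up to β 0 in Q
  have hQzero : ∀ (i : Fin k) (l : Fin n), (l : ℕ) < (β 0 : ℕ) → Q (α i) l = 0 := by
    intro i l hl
    rw [hQA, Matrix.mul_apply]
    apply Finset.sum_eq_zero
    intro x _
    rcases Nat.lt_or_ge (l : ℕ) (x : ℕ) with h1 | h1
    · rw [hRinv (show (id l : ℕ) < (id x : ℕ) from h1), mul_zero]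
    · rw [hAzero i x (by omega), zero_mul]
  have hβval : ∀ i : Fin k, (β i : ℕ) = (β 0 : ℕ) + (i : ℕ) := by
    intro i
    simpa using hβ.2 0 i (Nat.zero_le _)
  -- submatrix of triangular matrix has zero det when a row index exceeds col index
  have htrisub : ∀ (ω : Fin k → Fin n), StrictMono ω → ∀ i : Fin k,
      (β i : ℕ) < (ω i : ℕ) → (R.submatrix ω β).det = 0 := by
    intro ω hω i hi
    rw [Matrix.det_apply]
    apply Finset.sum_eq_zero
    intro σ _
    have hpig : ∃ b : Fin k, b ≤ i ∧ i ≤ σ b := by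
      by_contra h
      push_neg at h
      have hsub : (Finset.Iic i).image σ ⊆ Finset.Iio i := by
        intro a ha
        simp only [Finset.mem_image, Finset.mem_Iic] at ha
        obtain ⟨b, hb, rfl⟩ := ha
        exact Finset.mem_Iio.mpr (h b hb)
      have hcard := Finset.card_le_card hsub
      rw [Finset.card_image_of_injective _ σ.injective, Fin.card_Iic, Fin.card_Iio] at hcard
      omega
    obtain ⟨b, hb1, hb2⟩ := hpig
    have hz : R.submatrix ω β (σ b) b = 0 := by
      apply htri
      show (β b : ℕ) < (ω (σ b) : ℕ)
      calc (β b : ℕ) ≤ (β i : ℕ) := by exact_mod_cast hβ.1.monotone hb1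
      _ < (ω i : ℕ) := hi
      _ ≤ (ω (σ b) : ℕ) := by exact_mod_cast hω.monotone hb2
    exact smul_eq_zero_of_right _
      (Finset.prod_eq_zero (Finset.mem_univ b)
        (f := fun x => R.submatrix ω β (σ x) x) hz)
  constructor
  · intro ω hωmono hωβ
    rcases Nat.lt_or_ge (ω 0 : ℕ) (β 0 : ℕ) with h1 | h1
    · have : (Q.submatrix α ω).det = 0 := by
        apply Matrix.det_eq_zero_of_column_eq_zero 0
        intro i
        exact hQzero i (ω 0) h1
      rw [this, zero_mul]
    · by_cases h2 : ∃ i : Fin k, (β i : ℕ) < (ω i : ℕ)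
      · obtain ⟨i, hi⟩ := h2
        rw [htrisub ω hωmono i hi, mul_zero]
      · push_neg at h2
        exfalso
        apply hωβ
        have key : ∀ d : ℕ, ∀ hd : d < k, (ω 0 : ℕ) + d ≤ (ω ⟨d, hd⟩ : ℕ) := by
          intro d
          induction d with
          | zero =>
            intro hd
            have h0 : (⟨0, hd⟩ : Fin k) = 0 := by ext; simp
            simp [h0]
          | succ d ih =>
            intro hd
            have hd' : d < k := Nat.lt_of_succ_lt hd
            have hlt : (⟨d, hd'⟩ : Fin k) < (⟨d + 1, hd⟩ : Fin k) := by
              simp [Fin.lt_def]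
            have h1 : ((ω ⟨d, hd'⟩ : Fin n) : ℕ) < ((ω ⟨d + 1, hd⟩ : Fin n) : ℕ) :=
              Fin.lt_def.mp (hωmono hlt)
            have h2 := ih hd'
            omega
        funext i
        have hlow : (β i : ℕ) ≤ (ω i : ℕ) := by
          have hk := key (i : ℕ) i.isLt
          have hii : (⟨(i : ℕ), i.isLt⟩ : Fin k) = i := Fin.ext rfl
          rw [hii] at hk
          rw [hβval i]
          omega
        exact Fin.ext (le_antisymm (h2 i) hlow)
  · have hmat : A.submatrix α β = Q.submatrix α β * R.submatrix β β := by
      ext i j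
      rw [hQR]
      simp only [Matrix.submatrix_apply, Matrix.mul_apply]
      symm
      calc ∑ x : Fin k, Q (α i) (β x) * R (β x) (β j)
          = ∑ l ∈ Finset.univ.image β, Q (α i) l * R l (β j) :=
            (Finset.sum_image (s := Finset.univ) (g := β)
              (f := fun l => Q (α i) l * R l (β j))
              (fun x _ y _ h => hβ.1.injective h)).symm
        _ = ∑ l : Fin n, Q (α i) l * R l (β j) := by
            apply Finset.sum_subset (Finset.subset_univ _)
            intro l _ hl
            have hnotrange : ∀ t : Fin k, β t ≠ l := fun t ht =>
              hl (Finset.mem_image.mpr ⟨t, Finset.mem_univ t, ht⟩)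
            rcases Nat.lt_or_ge (l : ℕ) (β 0 : ℕ) with h1 | h1
            · rw [hQzero i l h1, zero_mul]
            · rcases Nat.lt_or_ge ((β ⟨k - 1, by omega⟩ : Fin n) : ℕ) (l : ℕ) with h2 | h2
              · have hlast := hβval ⟨k - 1, by omega⟩
                have hjv := hβval j
                have hjk := j.isLt
                have : (β j : ℕ) < (l : ℕ) := by
                  simp only [Fin.val_mk] at hlast
                  omega
                rw [htri (show (id (β j) : ℕ) < (id l : ℕ) from this), mul_zero]
              · exfalso
                have hlast := hβval ⟨k - 1, by omega⟩
                simp only [Fin.val_mk] at hlast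
                refine hnotrange ⟨(l : ℕ) - (β 0 : ℕ), by omega⟩ (Fin.ext ?_)
                rw [hβval]
                simp only [Fin.val_mk]
                omega
    rw [hmat, Matrix.det_mul]
end
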